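/- arXiv:1504.04065 — 2 statements merged into one kernel-verified Lean document; each statement's English description precedes it below -/
import Mathlib

section
/- In any alternative ring, the right Moufang identity holds: ((xz)y)z = x((zy)z) for all x, y, z. -/
/-!
Write `(a, b, c)` for the associator `(a * b) * c - a * (b * c)`. Alternativity makes the
associator vanish when two neighbouring arguments agree, so by linearization it is alternating.
The Teichmüller identity `associator_cocycle` at `(a, b, b, c)` and `(c, a, b, b)` then gives
`(a, b, b * c) = (a, b, c) * b`. The cocycle identity at `(x, z, y, z)`
then reduces the defect `((x * z) * y) * z - x * (z * (y * z))` to `(x, z * y, z) + (x, z, y) * z`,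
which vanishes by the previous identity, and `z * (y * z) = (z * y) * z` by flexibility.
-/

section Alternative

variable {R : Type*} [NonUnitalNonAssocRing R]

theorem associator_swap_left (hl : ∀ a b : R, associator a a b = 0) (a b c : R) :
    associator b a c = -associator a b c := by
  linear_combination (norm := (simp only [associator, add_mul, mul_add]; abel))
    hl (a + b) c - hl a c - hl b c

theorem associator_swap_right (hr : ∀ a b : R, associator a b b = 0) (a b c : R) :
    associator a c b = -associator a b c := by
  linear_combination (norm := (simp only [associator, add_mul, mul_add]; abel))
    hr a (b + c) - hr a b - hr a c

variable (hl : ∀ a b : R, associator a a b = 0) (hr : ∀ a b : R, associator a b b = 0)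
include hl hr

theorem associator_cyclic (a b c : R) : associator c a b = associator a b c := by
  rw [associator_swap_left hl, associator_swap_right hr, neg_neg]

theorem associator_flexible (a b : R) : associator a b a = 0 := by
  rw [associator_swap_right hr, hl, neg_zero]

theorem associator_self_mul (a b c : R) : associator a b (b * c) = associator a b c * b := by
  have h₁ := associator_cocycle a b b c
  have h₂ := associator_cocycle c a b b
  simp only [hl, hr, mul_zero, zero_mul] at h₁ h₂
  rw [associator_cyclic hl hr a b c, associator_cyclic hl hr a (b * b) c,
    associator_cyclic hl hr (a * b) b c] at h₂
  linear_combination (norm := abel) -h₁ - h₂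

end Alternative

/-- Right Moufang identity in an alternative ring. -/
theorem right_moufang {A : Type*} [NonUnitalNonAssocRing A]
    (alt_left : ∀ a b : A, (a * a) * b = a * (a * b))
    (alt_right : ∀ a b : A, (a * b) * b = a * (b * b)) :
    ∀ x y z : A, ((x * z) * y) * z = x * ((z * y) * z) := by
  intro x y z
  have hl : ∀ a b : A, associator a a b = 0 := fun a b => sub_eq_zero.mpr (alt_left a b)
  have hr : ∀ a b : A, associator a b b = 0 := fun a b => sub_eq_zero.mpr (alt_right a b)
  have h := associator_cocycle x z y z
  rw [associator_flexible hl hr, mul_zero, associator_swap_right hr x z,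
    associator_self_mul hl hr] at h
  calc ((x * z) * y) * z = x * (z * (y * z)) := by
        linear_combination (norm := (simp only [associator]; abel)) -h
    _ = x * ((z * y) * z) := by rw [← sub_eq_zero.mp (associator_flexible hl hr z y)]
end

section
/- For any four octonions a, b, c, d, one has 2·Re(ab)·Re(cd) = Re((a c̄)(d̄ b) + (ad)(cb)). -/
noncomputable section

/-- The octonions, constructed from the quaternions via the Cayley–Dickson doubling. -/
structure Octonion : Type where
  q1 : Quaternion ℝ
  q2 : Quaternion ℝ

namespace Octonion

instance : Zero Octonion := ⟨⟨0, 0⟩⟩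
instance : One Octonion := ⟨⟨1, 0⟩⟩
instance : Add Octonion := ⟨fun x y => ⟨x.q1 + y.q1, x.q2 + y.q2⟩⟩
instance : Neg Octonion := ⟨fun x => ⟨-x.q1, -x.q2⟩⟩
instance : Sub Octonion := ⟨fun x y => ⟨x.q1 - y.q1, x.q2 - y.q2⟩⟩

/-- Cayley–Dickson multiplication. -/
instance : Mul Octonion :=
  ⟨fun x y => ⟨x.q1 * y.q1 - star y.q2 * x.q2, y.q2 * x.q1 + x.q2 * star y.q1⟩⟩

instance : SMul ℝ Octonion := ⟨fun r x => ⟨r • x.q1, r • x.q2⟩⟩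

/-- Octonionic conjugation. -/
def conj (x : Octonion) : Octonion := ⟨star x.q1, -x.q2⟩

/-- The real part of an octonion. -/
def re (x : Octonion) : ℝ := x.q1.re

/-- The squared norm of an octonion. -/
def normSq (x : Octonion) : ℝ := Quaternion.normSq x.q1 + Quaternion.normSq x.q2

/-- The multiplicative inverse of a nonzero octonion. -/
instance : Inv Octonion := ⟨fun x => (normSq x)⁻¹ • conj x⟩

/-- The commutator of two octonions. -/
def comm (x y : Octonion) : Octonion := x * y - y * x

/-- The associator of three octonions. -/
def assoc (x y z : Octonion) : Octonion := (x * y) * z - x * (y * z)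

/-- The derivation `D_{a,b}` of the octonions. -/
def D (a b x : Octonion) : Octonion := comm (comm a b) x - (3 : ℝ) • assoc a b x

end Octonion

open Octonion

/-!
With `⟨u, v⟩ = Re (u v̄)`, the identity is the polarized composition law
`⟨xy, zw⟩ + ⟨xw, zy⟩ = 2 ⟨x, z⟩ ⟨y, w⟩` of the octonions (the second polarization of
`|xy|² = |x|² |y|²`), specialised to `x = a`, `y = c̄`, `z = b̄`, `w = d`;
what remains is the conjugation calculus `conj (xy) = ȳ x̄`, `Re x̄ = Re x`, `Re (xy) = Re (yx)`.
-/

theorem Quaternion.re_mul_comm (p q : Quaternion ℝ) : (p * q).re = (q * p).re := by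
  simp only [Quaternion.re_mul]
  ring

namespace Octonion

@[ext]
lemma ext {x y : Octonion} (h1 : x.q1 = y.q1) (h2 : x.q2 = y.q2) : x = y := by
  cases x
  cases y
  congr

@[simp] lemma q1_mul (x y : Octonion) : (x * y).q1 = x.q1 * y.q1 - star y.q2 * x.q2 := rfl
@[simp] lemma q2_mul (x y : Octonion) : (x * y).q2 = y.q2 * x.q1 + x.q2 * star y.q1 := rfl
@[simp] lemma q1_conj (x : Octonion) : (conj x).q1 = star x.q1 := rfl
@[simp] lemma q2_conj (x : Octonion) : (conj x).q2 = -x.q2 := rfl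

lemma re_add (x y : Octonion) : re (x + y) = re x + re y := rfl

lemma re_conj (x : Octonion) : re (conj x) = re x := Quaternion.re_star x.q1

lemma conj_conj (x : Octonion) : conj (conj x) = x := by
  simp [conj]

lemma conj_mul (x y : Octonion) : conj (x * y) = conj y * conj x := by
  ext : 1
  · simp only [q1_conj, q2_conj, q1_mul, star_sub, star_mul, star_neg, star_star, neg_mul,
      mul_neg, neg_neg]
  · simp only [q1_conj, q2_conj, q2_mul, star_star, neg_mul, neg_add_rev, add_comm]

lemma re_mul_comm (x y : Octonion) : re (x * y) = re (y * x) := by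
  change (x.q1 * y.q1 - star y.q2 * x.q2).re = (y.q1 * x.q1 - star x.q2 * y.q2).re
  rw [Quaternion.re_sub, Quaternion.re_sub, Quaternion.re_mul_comm x.q1,
    ← Quaternion.re_star (star y.q2 * x.q2), star_mul, star_star]

lemma re_mul_mul_conj_add_re_mul_mul_conj (x y z w : Octonion) :
    re ((x * y) * conj (z * w)) + re ((x * w) * conj (z * y)) =
      2 * re (x * conj z) * re (y * conj w) := by
  simp only [re, q1_mul, q2_mul, q1_conj, q2_conj, Quaternion.re_sub, Quaternion.re_add,
    Quaternion.re_mul, Quaternion.re_neg,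
    Quaternion.imI_sub, Quaternion.imJ_sub, Quaternion.imK_sub, Quaternion.imI_add,
    Quaternion.imJ_add, Quaternion.imK_add, Quaternion.imI_mul, Quaternion.imJ_mul,
    Quaternion.imK_mul, Quaternion.imI_neg, Quaternion.imJ_neg, Quaternion.imK_neg,
    Quaternion.re_star, Quaternion.imI_star, Quaternion.imJ_star, Quaternion.imK_star]
  ring

end Octonion

theorem two_re_mul_re (a b c d : Octonion) :
    2 * re (a * b) * re (c * d) = re ((a * conj c) * (conj d * b) + (a * d) * (c * b)) := by
  have h := re_mul_mul_conj_add_re_mul_mul_conj a (conj c) (conj b) d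
  simp only [conj_mul, conj_conj] at h
  rw [← conj_mul, re_conj, re_mul_comm d c] at h
  rw [re_add, h]
end
end
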